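/- arXiv:2401.01137 — 3 statements merged into one kernel-verified Lean document; each statement's English description precedes it below -/
import Mathlib

section
/- Let p be a prime, F, G : S → ℤ/pℤ functions defined on a subset S of ℤ/pℤ, and define K(n₁,n₂) = (1/p) ∑_{y ∈ S} e_p(n₁ F(y) + n₂ G(y)). Then ∑_{n₁,m₁,a,b,b' ∈ ℤ/pℤ} K(n₁-b,b) · conj(K(m₁-b,b)) · conj(K(n₁-b,b-a)) · K(m₁-b,b-a) · conj(K(n₁-b',b')) · K(m₁-b',b') · K(n₁-b',b'-a) · conj(K(m₁-b',b'-a)) = (1/p³)·N, where N is the number of tuples (y₁,…,y₈) ∈ S⁸ satisfying the five equations: F(y₁)-G(y₁)-F(y₂)+G(y₂)-F(y₃)+G(y₃)+F(y₄)-G(y₄)=0; F(y₅)-G(y₅)-F(y₆)+G(y₆)-F(y₇)+G(y₇)+F(y₈)-G(y₈)=0; F(y₁)-F(y₃)-F(y₅)+F(y₇)=0; F(y₂)-F(y₄)-F(y₆)+F(y₈)=0; G(y₃)-G(y₄)-G(y₇)+G(y₈)=0. -/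
open Finset

noncomputable def ep (p : ℕ) (x : ZMod p) : ℂ :=
  Complex.exp (2 * Real.pi * Complex.I * x.val / p)

noncomputable def ft (p : ℕ) [NeZero p] (f : ZMod p → ℂ) (ξ : ZMod p) : ℂ :=
  (1 / p) * ∑ x : ZMod p, f x * ep p (-(x * ξ))

noncomputable def L2 (p : ℕ) [NeZero p] (f : ZMod p → ℂ) : ℝ :=
  Real.sqrt ((1 / p) * ∑ x : ZMod p, ‖f x‖ ^ 2)
/-- The `𝔽_p`-points of the Roth variety associated to `F, G` on `S`:
tuples `(y₁,…,y₈) ∈ S⁸` satisfying the five defining equations. -/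
def rothSet (p : ℕ) [NeZero p] (S : Finset (ZMod p)) (F G : ZMod p → ZMod p) :
    Finset (Fin 8 → ZMod p) :=
  Finset.univ.filter (fun y =>
    (∀ i, y i ∈ S) ∧
    F (y 0) - G (y 0) - F (y 1) + G (y 1) - F (y 2) + G (y 2) + F (y 3) - G (y 3) = 0 ∧
    F (y 4) - G (y 4) - F (y 5) + G (y 5) - F (y 6) + G (y 6) + F (y 7) - G (y 7) = 0 ∧
    F (y 0) - F (y 2) - F (y 4) + F (y 6) = 0 ∧
    F (y 1) - F (y 3) - F (y 5) + F (y 7) = 0 ∧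
    G (y 2) - G (y 3) - G (y 6) + G (y 7) = 0)

/-!
Since `ep = ZMod.stdAddChar` is an additive character, `conj (K n₁ n₂) = K (-n₁) (-n₂)`, and the
product of the eight factors expands as `p⁻⁸` times a sum over `y ∈ S⁸` of a single character value
whose phase is linear in `(n₁, m₁, a, b, b')`, with the five Roth forms of `y` as coefficients.
Summing over these five variables first, orthogonality gives `p⁵` exactly when all five forms
vanish, i.e. when `y ∈ rothSet`, and `0` otherwise.
-/

lemma ep_eq_stdAddChar (p : ℕ) [NeZero p] (x : ZMod p) : ep p x = ZMod.stdAddChar x := by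
  rw [ep, ZMod.stdAddChar_apply, ZMod.toCircle_apply]

lemma AddChar.map_sum_eq_prod {A M ι : Type*} [AddCommMonoid A] [CommMonoid M]
    (ψ : AddChar A M) (s : Finset ι) (f : ι → A) : ψ (∑ i ∈ s, f i) = ∏ i ∈ s, ψ (f i) := by
  classical
  induction s using Finset.induction_on with
  | empty => simp
  | insert i s hi ih => rw [sum_insert hi, prod_insert hi, ψ.map_add_eq_mul, ih]

lemma AddChar.prod_sum_eq_sum_piFinset {A M ι α : Type*} [AddCommMonoid A] [CommSemiring M]
    [Fintype ι] [DecidableEq ι] (ψ : AddChar A M) (S : Finset α) (f : ι → α → A) :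
    ∏ i, ∑ y ∈ S, ψ (f i y) = ∑ y ∈ Fintype.piFinset (fun _ => S), ψ (∑ i, f i (y i)) := by
  simp only [prod_univ_sum, ψ.map_sum_eq_prod]

section
variable {N : ℕ} [NeZero N]

lemma sum_stdAddChar_mul (t : ZMod N) :
    ∑ x : ZMod N, ZMod.stdAddChar (x * t) = if t = 0 then (N : ℂ) else 0 := by
  rw [AddChar.sum_mulShift _ (ZMod.isPrimitive_stdAddChar N), ZMod.card, Nat.cast_ite,
    Nat.cast_zero]

lemma sum_stdAddChar_linear_five (A B C D E : ZMod N) :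
    ∑ x₁ : ZMod N, ∑ x₂ : ZMod N, ∑ x₃ : ZMod N, ∑ x₄ : ZMod N, ∑ x₅ : ZMod N,
      ZMod.stdAddChar (x₁ * A + x₂ * B + x₃ * C + x₄ * D + x₅ * E)
    = if A = 0 ∧ B = 0 ∧ C = 0 ∧ D = 0 ∧ E = 0 then (N : ℂ) ^ 5 else 0 := by
  simp only [AddChar.map_add_eq_mul, ← mul_sum, ← sum_mul, sum_stdAddChar_mul]
  split_ifs <;> simp_all [pow_succ]

variable {S : Finset (ZMod N)} {F G : ZMod N → ZMod N} {K : ZMod N → ZMod N → ℂ}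

lemma conj_K_eq (hK : ∀ n₁ n₂, K n₁ n₂ = (1 / N) * ∑ y ∈ S, ep N (n₁ * F y + n₂ * G y))
    (n₁ n₂ : ZMod N) : starRingEnd ℂ (K n₁ n₂) = K (-n₁) (-n₂) := by
  simp only [hK, ep_eq_stdAddChar, map_mul, map_sum, ← AddChar.map_neg_eq_conj, neg_mul, neg_add,
    map_div₀, map_one, map_natCast]

lemma prod_K_eq {ι : Type*} [Fintype ι] [DecidableEq ι]
    (hK : ∀ n₁ n₂, K n₁ n₂ = (1 / N) * ∑ y ∈ S, ep N (n₁ * F y + n₂ * G y))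
    (c : ι → ZMod N × ZMod N) :
    ∏ i, K (c i).1 (c i).2 = (1 / N) ^ Fintype.card ι *
      ∑ y ∈ Fintype.piFinset (fun _ => S),
        ZMod.stdAddChar (∑ i, ((c i).1 * F (y i) + (c i).2 * G (y i))) := by
  simp only [hK, ep_eq_stdAddChar, prod_mul_distrib, prod_const, card_univ,
    ZMod.stdAddChar.prod_sum_eq_sum_piFinset]

end

/-- The frequency pairs of the eight factors of the moment, each `conj (K n₁ n₂)` being read as
`K (-n₁) (-n₂)`. -/
def momentFreqs {N : ℕ} (n₁ m₁ a b b' : ZMod N) : Fin 8 → ZMod N × ZMod N :=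
  ![(n₁ - b, b), (-(m₁ - b), -b), (-(n₁ - b), -(b - a)), (m₁ - b, b - a),
    (-(n₁ - b'), -b'), (m₁ - b', b'), (n₁ - b', b' - a), (-(m₁ - b'), -(b' - a))]

/-- The equations of `rothSet`, ordered and signed as the coefficients of `n₁, m₁, a, b, b'` in the
phase of the expanded moment. -/
def rothForms {N : ℕ} (F G : ZMod N → ZMod N) (y : Fin 8 → ZMod N) : Fin 5 → ZMod N :=
  ![F (y 0) - F (y 2) - F (y 4) + F (y 6),
    -(F (y 1) - F (y 3) - F (y 5) + F (y 7)),
    G (y 2) - G (y 3) - G (y 6) + G (y 7),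
    -(F (y 0) - G (y 0) - F (y 1) + G (y 1) - F (y 2) + G (y 2) + F (y 3) - G (y 3)),
    F (y 4) - G (y 4) - F (y 5) + G (y 5) - F (y 6) + G (y 6) + F (y 7) - G (y 7)]

lemma sum_momentFreqs_eq {N : ℕ} (F G : ZMod N → ZMod N) (n₁ m₁ a b b' : ZMod N)
    (y : Fin 8 → ZMod N) :
    ∑ i, ((momentFreqs n₁ m₁ a b b' i).1 * F (y i) + (momentFreqs n₁ m₁ a b b' i).2 * G (y i)) =
      n₁ * rothForms F G y 0 + m₁ * rothForms F G y 1 + a * rothForms F G y 2 +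
        b * rothForms F G y 3 + b' * rothForms F G y 4 := by
  simp only [Fin.sum_univ_eight, momentFreqs, rothForms, Matrix.cons_val]
  ring

lemma rothSet_eq_filter {N : ℕ} [NeZero N] (S : Finset (ZMod N)) (F G : ZMod N → ZMod N) :
    rothSet N S F G = (Fintype.piFinset fun _ => S).filter fun y =>
      rothForms F G y 0 = 0 ∧ rothForms F G y 1 = 0 ∧ rothForms F G y 2 = 0 ∧
        rothForms F G y 3 = 0 ∧ rothForms F G y 4 = 0 := by
  ext y
  simp only [rothSet, rothForms, mem_filter, mem_univ, true_and, Fintype.mem_piFinset,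
    Matrix.cons_val, neg_eq_zero]
  tauto

theorem eighth_moment_eq_roth_count (p : ℕ) [Fact p.Prime]
    (S : Finset (ZMod p)) (F G : ZMod p → ZMod p)
    (K : ZMod p → ZMod p → ℂ)
    (hK : ∀ n₁ n₂ : ZMod p, K n₁ n₂ = (1 / p) * ∑ y ∈ S, ep p (n₁ * F y + n₂ * G y)) :
    ∑ n₁ : ZMod p, ∑ m₁ : ZMod p, ∑ a : ZMod p, ∑ b : ZMod p, ∑ b' : ZMod p,
        K (n₁ - b) b * (starRingEnd ℂ) (K (m₁ - b) b) *
          (starRingEnd ℂ) (K (n₁ - b) (b - a)) * K (m₁ - b) (b - a) *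
          (starRingEnd ℂ) (K (n₁ - b') b') * K (m₁ - b') b' *
          K (n₁ - b') (b' - a) * (starRingEnd ℂ) (K (m₁ - b') (b' - a)) =
      (1 / (p : ℂ) ^ 3) * (rothSet p S F G).card := by
  calc _ = ∑ n₁ : ZMod p, ∑ m₁ : ZMod p, ∑ a : ZMod p, ∑ b : ZMod p, ∑ b' : ZMod p,
          ∏ i, K (momentFreqs n₁ m₁ a b b' i).1 (momentFreqs n₁ m₁ a b b' i).2 := by
        simp [Fin.prod_univ_eight, momentFreqs, conj_K_eq hK]
    _ = (1 / p) ^ 8 * ∑ y ∈ Fintype.piFinset (fun _ => S),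
          ∑ n₁ : ZMod p, ∑ m₁ : ZMod p, ∑ a : ZMod p, ∑ b : ZMod p, ∑ b' : ZMod p,
            ZMod.stdAddChar (n₁ * rothForms F G y 0 + m₁ * rothForms F G y 1 +
              a * rothForms F G y 2 + b * rothForms F G y 3 + b' * rothForms F G y 4) := by
        simp only [prod_K_eq hK, sum_momentFreqs_eq, Fintype.card_fin, mul_sum,
          sum_comm (t := Fintype.piFinset fun _ => S)]
    _ = (1 / p) ^ 8 * ∑ y ∈ Fintype.piFinset (fun _ => S),
          if rothForms F G y 0 = 0 ∧ rothForms F G y 1 = 0 ∧ rothForms F G y 2 = 0 ∧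
            rothForms F G y 3 = 0 ∧ rothForms F G y 4 = 0 then (p : ℂ) ^ 5 else 0 := by
        simp only [sum_stdAddChar_linear_five]
    _ = _ := by
        rw [← sum_filter, ← rothSet_eq_filter, sum_const, nsmul_eq_mul]
        field_simp
end

section
/- Let p be a prime, S ⊆ ℤ/pℤ, and F, G : S → ℤ/pℤ functions such that for all (n,ξ) ≠ (0,0) in (ℤ/pℤ)², |(1/p)∑_{y ∈ S} e_p(n(G(y)-F(y)) + ξ F(y))| ≤ C p^{-1/2}. Then for any f₁, f₂ : ℤ/pℤ → ℂ with ∑_z f₂(z) = 0, the dual function 𝒟(x) = (1/p) ∑_{y ∈ S} f₁(x+F(y)) f₂(x+G(y)) satisfies ‖𝒟̂‖_{ℓ^∞} ≤ C' · p^{-1/2} ‖f₁‖₂ ‖f₂‖₂ for a constant C' depending only on C. -/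
open Finset

lemma ep_zero (p : ℕ) : ep p 0 = 1 := by
  simp [ep]

lemma ep_add (p : ℕ) [NeZero p] (x y : ZMod p) : ep p (x + y) = ep p x * ep p y := by
  have hp : (p : ℂ) ≠ 0 := Nat.cast_ne_zero.2 (NeZero.ne p)
  obtain ⟨k, hk⟩ : ∃ k : ℕ, x.val + y.val = (x + y).val + p * k :=
    ⟨(x.val + y.val) / p, by rw [ZMod.val_add]; exact (Nat.mod_add_div _ _).symm⟩
  unfold ep
  rw [← Complex.exp_add]
  have h2 : (x.val : ℂ) + (y.val : ℂ) = ((x+y).val : ℂ) + (p:ℂ) * (k:ℂ) := by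
    exact_mod_cast congrArg (Nat.cast : ℕ → ℂ) hk
  have h1 : 2 * (Real.pi:ℂ) * Complex.I * (x.val:ℂ) / p + 2 * (Real.pi:ℂ) * Complex.I * (y.val:ℂ) / p
      = 2 * (Real.pi:ℂ) * Complex.I * ((x+y).val:ℂ) / p + (k:ℤ) * (2 * (Real.pi:ℂ) * Complex.I) := by
    simp only [ZMod.natCast_val] at h2 ⊢
    field_simp
    linear_combination h2
  rw [h1, Complex.exp_add, Complex.exp_int_mul_two_pi_mul_I, mul_one]

lemma ep_ne_one (p : ℕ) [NeZero p] {c : ZMod p} (hc : c ≠ 0) : ep p c ≠ 1 := by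
  intro h
  rw [ep, Complex.exp_eq_one_iff] at h
  obtain ⟨n, hn⟩ := h
  have hpi : (2 * (Real.pi:ℂ) * Complex.I) ≠ 0 := by
    simp [Real.pi_ne_zero, Complex.I_ne_zero]
  have hp : (p : ℂ) ≠ 0 := Nat.cast_ne_zero.2 (NeZero.ne p)
  have h4 : ((c.val : ℂ)/p) = n := mul_left_cancel₀ hpi (by linear_combination hn)
  have h5 : (c.val : ℂ) = n * p := (div_eq_iff hp).mp h4
  have h6 : (c.val : ℤ) = n * p := by exact_mod_cast h5
  have hlt : c.val < p := ZMod.val_lt c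
  have hne : c.val ≠ 0 := fun h => hc ((ZMod.val_eq_zero c).mp h)
  have hdvd : (p:ℤ) ∣ (c.val:ℤ) := Dvd.intro n (by linarith)
  have h7 : (p:ℤ) ≤ (c.val:ℤ) := Int.le_of_dvd (by exact_mod_cast Nat.pos_of_ne_zero hne) hdvd
  omega

lemma ep_mul_ep_neg (p : ℕ) [NeZero p] (x : ZMod p) : ep p x * ep p (-x) = 1 := by
  rw [← ep_add]; simp [ep_zero]

lemma ep_ne_zero (p : ℕ) [NeZero p] (x : ZMod p) : ep p x ≠ 0 :=
  Complex.exp_ne_zero _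

lemma abs_ep (p : ℕ) (x : ZMod p) : ‖ep p x‖ = 1 := by
  rw [ep]
  rw [show 2 * (Real.pi:ℂ) * Complex.I * (x.val:ℂ) / p
      = ((2 * Real.pi * (x.val:ℝ) / p : ℝ) : ℂ) * Complex.I by push_cast; ring]
  exact Complex.norm_exp_ofReal_mul_I _

lemma conj_ep (p : ℕ) [NeZero p] (x : ZMod p) :
    (starRingEnd ℂ) (ep p x) = ep p (-x) := by
  have h1 : (starRingEnd ℂ) (ep p x) * ep p x = 1 := by
    rw [Complex.conj_mul']
    norm_cast
    rw [abs_ep]; norm_num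
  rw [eq_inv_of_mul_eq_one_left h1, eq_inv_of_mul_eq_one_right (ep_mul_ep_neg p x)]

lemma sum_ep (p : ℕ) [Fact p.Prime] (c : ZMod p) :
    ∑ x : ZMod p, ep p (x * c) = if c = 0 then (p : ℂ) else 0 := by
  split_ifs with h
  · simp [h, ep_zero, ZMod.card]
  · set T := ∑ x : ZMod p, ep p (x * c) with hT
    have key : ep p c * T = T := by
      rw [hT, Finset.mul_sum]
      rw [← Equiv.sum_comp (Equiv.addRight (1 : ZMod p)) (fun x => ep p (x * c))]
      apply Finset.sum_congr rfl
      intro x _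
      simp only [Equiv.coe_addRight]
      rw [add_mul, one_mul, ep_add]
      ring
    have : (ep p c - 1) * T = 0 := by linear_combination key
    rcases mul_eq_zero.mp this with h1 | h1
    · exact absurd (by linear_combination h1 : ep p c = 1) (ep_ne_one p h)
    · exact h1

lemma pc_ne_zero (p : ℕ) [NeZero p] : (p : ℂ) ≠ 0 := Nat.cast_ne_zero.2 (NeZero.ne p)

lemma ep_comb (p : ℕ) [NeZero p] {a b c : ZMod p} (h : c = a + b) :
    ep p a * ep p b = ep p c := by rw [h, ep_add]

lemma ft_inv (p : ℕ) [Fact p.Prime] (f : ZMod p → ℂ) (t : ZMod p) :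
    ∑ b : ZMod p, ft p f b * ep p (t * b) = f t := by
  have hp := pc_ne_zero p
  calc ∑ b : ZMod p, ft p f b * ep p (t * b)
      = ∑ b : ZMod p, ∑ x : ZMod p, (1/(p:ℂ)) * f x * (ep p (-(x * b)) * ep p (t * b)) := by
        refine Finset.sum_congr rfl fun b _ => ?_
        rw [ft]
        simp only [Finset.mul_sum, Finset.sum_mul]
        exact Finset.sum_congr rfl fun x _ => by ring
    _ = ∑ x : ZMod p, ∑ b : ZMod p, (1/(p:ℂ)) * f x * ep p (b * (t - x)) := by
        rw [Finset.sum_comm]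
        refine Finset.sum_congr rfl fun x _ => Finset.sum_congr rfl fun b _ => ?_
        rw [ep_comb p (by ring : b * (t - x) = -(x*b) + t*b)]
    _ = ∑ x : ZMod p, (1/(p:ℂ)) * f x * (if t - x = 0 then (p:ℂ) else 0) := by
        refine Finset.sum_congr rfl fun x _ => ?_
        rw [← Finset.mul_sum, sum_ep]
    _ = f t := by
        rw [Finset.sum_eq_single t]
        · rw [if_pos (sub_self t)]; field_simp
        · intro x _ hx
          rw [if_neg (fun h => hx (sub_eq_zero.mp h).symm), mul_zero]
        · intro h; exact absurd (Finset.mem_univ t) h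

lemma conj_ft (p : ℕ) [Fact p.Prime] (f : ZMod p → ℂ) (a : ZMod p) :
    (starRingEnd ℂ) (ft p f a) = (1/(p:ℂ)) * ∑ y : ZMod p, (starRingEnd ℂ) (f y) * ep p (y * a) := by
  rw [ft, map_mul, map_div₀, map_one, map_natCast, map_sum]
  congr 1
  refine Finset.sum_congr rfl fun y _ => ?_
  rw [map_mul, conj_ep, neg_neg]

lemma abs_sq_eq (z : ℂ) : ((‖z‖ : ℝ) : ℂ)^2 = z * (starRingEnd ℂ) z := by
  rw [Complex.mul_conj]
  norm_cast
  exact Complex.sq_norm z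

lemma parseval (p : ℕ) [Fact p.Prime] (f : ZMod p → ℂ) :
    ∑ a : ZMod p, (‖ft p f a‖ : ℝ) ^ 2
      = (1 / p) * ∑ x : ZMod p, ‖f x‖ ^ 2 := by
  have hp := pc_ne_zero p
  have key : ∑ a : ZMod p, ft p f a * (starRingEnd ℂ) (ft p f a)
      = (1/(p:ℂ)) * ∑ x : ZMod p, f x * (starRingEnd ℂ) (f x) := by
    calc ∑ a : ZMod p, ft p f a * (starRingEnd ℂ) (ft p f a)
        = ∑ a : ZMod p, ∑ x : ZMod p, ∑ y : ZMod p,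
            (1/(p:ℂ))^2 * (f x * (starRingEnd ℂ) (f y)) * (ep p (-(x*a)) * ep p (y*a)) := by
          refine Finset.sum_congr rfl fun a _ => ?_
          rw [conj_ft, ft, mul_mul_mul_comm, Finset.sum_mul_sum, Finset.mul_sum]
          refine Finset.sum_congr rfl fun x _ => ?_
          rw [Finset.mul_sum]
          exact Finset.sum_congr rfl fun y _ => by ring
      _ = ∑ x : ZMod p, ∑ y : ZMod p, ∑ a : ZMod p,
            (1/(p:ℂ))^2 * (f x * (starRingEnd ℂ) (f y)) * ep p (a * (y - x)) := by
          rw [Finset.sum_comm]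
          refine Finset.sum_congr rfl fun x _ => ?_
          rw [Finset.sum_comm]
          refine Finset.sum_congr rfl fun y _ => Finset.sum_congr rfl fun a _ => ?_
          rw [ep_comb p (by ring : a * (y - x) = -(x*a) + y*a)]
      _ = ∑ x : ZMod p, ∑ y : ZMod p,
            (1/(p:ℂ))^2 * (f x * (starRingEnd ℂ) (f y)) * (if y - x = 0 then (p:ℂ) else 0) := by
          refine Finset.sum_congr rfl fun x _ => Finset.sum_congr rfl fun y _ => ?_
          rw [← Finset.mul_sum, sum_ep]
      _ = (1/(p:ℂ)) * ∑ x : ZMod p, f x * (starRingEnd ℂ) (f x) := by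
          rw [Finset.mul_sum]
          refine Finset.sum_congr rfl fun x _ => ?_
          rw [Finset.sum_eq_single x]
          · rw [if_pos (sub_self x)]; field_simp
          · intro y _ hy
            rw [if_neg (fun h => hy (sub_eq_zero.mp h)), mul_zero]
          · intro h; exact absurd (Finset.mem_univ x) h
  have c1 : ((∑ a : ZMod p, (‖ft p f a‖) ^ 2 : ℝ) : ℂ)
      = ∑ a : ZMod p, ft p f a * (starRingEnd ℂ) (ft p f a) := by
    push_cast
    exact Finset.sum_congr rfl fun a _ => abs_sq_eq _
  have c2 : (((1/(p:ℝ)) * ∑ x : ZMod p, ‖f x‖ ^ 2 : ℝ) : ℂ)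
      = (1/(p:ℂ)) * ∑ x : ZMod p, f x * (starRingEnd ℂ) (f x) := by
    push_cast
    congr 1
    exact Finset.sum_congr rfl fun x _ => abs_sq_eq _
  exact Complex.ofReal_injective (by rw [c1, c2]; exact key)

theorem dual_function_linf_bound (C : ℝ) :
    ∃ C' : ℝ, ∀ (p : ℕ) [Fact p.Prime] (S : Finset (ZMod p)) (F G : ZMod p → ZMod p),
      (∀ n ξ : ZMod p, ¬(n = 0 ∧ ξ = 0) →
        ‖(1 / p) * ∑ y ∈ S, ep p (n * (G y - F y) + ξ * F y)‖ ≤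
          C * (p : ℝ) ^ (-(1 : ℝ) / 2)) →
      ∀ (f₁ f₂ : ZMod p → ℂ), (∑ z : ZMod p, f₂ z = 0) →
        ∀ (𝒟 : ZMod p → ℂ),
          (∀ x : ZMod p, 𝒟 x = (1 / p) * ∑ y ∈ S, f₁ (x + F y) * f₂ (x + G y)) →
          ∀ ξ : ZMod p, ‖ft p 𝒟 ξ‖ ≤
            C' * (p : ℝ) ^ (-(1 : ℝ) / 2) * L2 p f₁ * L2 p f₂ := by
  refine ⟨|C|, ?_⟩
  intro p _ S F G h f₁ f₂ hf₂ 𝒟 h𝒟 ξ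
  have hp := pc_ne_zero p
  have hppos : (0:ℝ) < p := by
    have : p ≠ 0 := NeZero.ne p
    positivity
  have hrpos : (0:ℝ) < (p : ℝ) ^ (-(1:ℝ)/2) := Real.rpow_pos_of_pos hppos _
  have hC : 0 ≤ C := by
    have h1 := h 1 0 (by simp)
    have h0 := norm_nonneg ((1/(p:ℂ)) * ∑ y ∈ S, ep p (1 * (G y - F y) + 0 * F y))
    nlinarith [h1, h0, hrpos]
  set T : ZMod p → ℂ := fun b => (1 / (p:ℂ)) * ∑ y ∈ S, ep p (b * (G y - F y) + ξ * F y) with hT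
  -- main identity
  have hmain : ft p 𝒟 ξ = ∑ b : ZMod p, ft p f₁ (ξ - b) * ft p f₂ b * T b := by
    calc ft p 𝒟 ξ
        = ∑ x : ZMod p, ∑ y ∈ S, ∑ a : ZMod p, ∑ b : ZMod p,
            (1/(p:ℂ))^2 * (ft p f₁ a * ft p f₂ b) *
              (ep p ((x + F y)*a) * ep p ((x + G y)*b) * ep p (-(x*ξ))) := by
          rw [ft, Finset.mul_sum]
          refine Finset.sum_congr rfl fun x _ => ?_
          rw [h𝒟 x]
          simp only [Finset.mul_sum, Finset.sum_mul]
          refine Finset.sum_congr rfl fun y _ => ?_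
          rw [← ft_inv p f₁ (x + F y), ← ft_inv p f₂ (x + G y), Finset.sum_mul_sum]
          simp only [Finset.mul_sum, Finset.sum_mul]
          refine Finset.sum_congr rfl fun a _ => Finset.sum_congr rfl fun b _ => by ring
      _ = ∑ y ∈ S, ∑ a : ZMod p, ∑ b : ZMod p,
            (1/(p:ℂ))^2 * (ft p f₁ a * ft p f₂ b) *
              (ep p (F y * a + G y * b) * ∑ x : ZMod p, ep p (x * (a + b - ξ))) := by
          rw [Finset.sum_comm]
          refine Finset.sum_congr rfl fun y _ => ?_
          rw [Finset.sum_comm]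
          refine Finset.sum_congr rfl fun a _ => ?_
          rw [Finset.sum_comm]
          refine Finset.sum_congr rfl fun b _ => ?_
          rw [Finset.mul_sum, Finset.mul_sum]
          refine Finset.sum_congr rfl fun x _ => ?_
          rw [show ep p ((x + F y)*a) * ep p ((x + G y)*b) * ep p (-(x*ξ))
              = ep p (F y * a + G y * b) * ep p (x * (a + b - ξ)) by
            rw [ep_comb p (show (x + F y)*a + (x + G y)*b = ((x + F y)*a) + ((x + G y)*b) from rfl),
              ep_comb p (rfl : ((x + F y)*a + (x + G y)*b) + -(x*ξ) = _),
              ep_comb p (rfl : (F y * a + G y * b) + x * (a + b - ξ) = _)]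
            congr 1
            ring]
      _ = ∑ y ∈ S, ∑ a : ZMod p, ∑ b : ZMod p,
            (1/(p:ℂ))^2 * (ft p f₁ a * ft p f₂ b) *
              (ep p (F y * a + G y * b) * (if a + b - ξ = 0 then (p:ℂ) else 0)) := by
          refine Finset.sum_congr rfl fun y _ => Finset.sum_congr rfl fun a _ =>
            Finset.sum_congr rfl fun b _ => ?_
          rw [sum_ep]
      _ = ∑ y ∈ S, ∑ b : ZMod p,
            (1/(p:ℂ))^2 * (ft p f₁ (ξ - b) * ft p f₂ b) *
              (ep p (F y * (ξ - b) + G y * b) * (p:ℂ)) := by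
          refine Finset.sum_congr rfl fun y _ => ?_
          rw [Finset.sum_comm]
          refine Finset.sum_congr rfl fun b _ => ?_
          rw [Finset.sum_eq_single (ξ - b)]
          · rw [if_pos (by ring)]
          · intro a _ ha
            rw [if_neg (fun hz => ha (by linear_combination hz)), mul_zero, mul_zero]
          · intro hmem; exact absurd (Finset.mem_univ _) hmem
      _ = ∑ b : ZMod p, ft p f₁ (ξ - b) * ft p f₂ b * T b := by
          rw [Finset.sum_comm, hT]
          refine Finset.sum_congr rfl fun b _ => ?_
          simp only [Finset.mul_sum]
          refine Finset.sum_congr rfl fun y _ => ?_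
          rw [show F y * (ξ - b) + G y * b = b * (G y - F y) + ξ * F y from by ring]
          field_simp
  -- termwise bound
  have hterm : ∀ b : ZMod p, ‖ft p f₁ (ξ - b) * ft p f₂ b * T b‖ ≤
      C * (p : ℝ) ^ (-(1:ℝ)/2) * (‖ft p f₁ (ξ - b)‖ * ‖ft p f₂ b‖) := by
    intro b
    rw [norm_mul, norm_mul]
    by_cases hb : b = 0 ∧ ξ = 0
    · have hf2 : ft p f₂ b = 0 := by
        rw [hb.1, ft]
        simp only [mul_zero, neg_zero, ep_zero, mul_one]
        rw [hf₂, mul_zero]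
      rw [hf2]
      simp only [map_zero, norm_zero, mul_zero, zero_mul]
      positivity
    · calc ‖ft p f₁ (ξ - b)‖ * ‖ft p f₂ b‖ * ‖T b‖
          ≤ ‖ft p f₁ (ξ - b)‖ * ‖ft p f₂ b‖ * (C * (p : ℝ) ^ (-(1:ℝ)/2)) := by
            apply mul_le_mul_of_nonneg_left (h b ξ hb) (by positivity)
        _ = C * (p : ℝ) ^ (-(1:ℝ)/2) * (‖ft p f₁ (ξ - b)‖ * ‖ft p f₂ b‖) := by
            ring
  -- Cauchy-Schwarz
  have hcs : ∑ b : ZMod p, ‖ft p f₁ (ξ - b)‖ * ‖ft p f₂ b‖ ≤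
      L2 p f₁ * L2 p f₂ := by
    have h1 := Finset.sum_mul_sq_le_sq_mul_sq Finset.univ
      (fun b : ZMod p => ‖ft p f₁ (ξ - b)‖) (fun b => ‖ft p f₂ b‖)
    have h2 : ∑ b : ZMod p, ‖ft p f₁ (ξ - b)‖ ^ 2
        = ∑ a : ZMod p, ‖ft p f₁ a‖ ^ 2 :=
      Fintype.sum_equiv (Equiv.subLeft ξ) _ _ (fun b => rfl)
    have hnn : (0:ℝ) ≤ ∑ b : ZMod p, ‖ft p f₁ (ξ - b)‖ * ‖ft p f₂ b‖ :=
      Finset.sum_nonneg fun b _ => by positivity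
    calc ∑ b : ZMod p, ‖ft p f₁ (ξ - b)‖ * ‖ft p f₂ b‖
        = Real.sqrt ((∑ b : ZMod p, ‖ft p f₁ (ξ - b)‖ * ‖ft p f₂ b‖)^2) :=
          (Real.sqrt_sq hnn).symm
      _ ≤ Real.sqrt ((∑ b : ZMod p, ‖ft p f₁ (ξ - b)‖^2) *
            (∑ b : ZMod p, ‖ft p f₂ b‖^2)) := Real.sqrt_le_sqrt h1
      _ = Real.sqrt (∑ b : ZMod p, ‖ft p f₁ (ξ - b)‖^2) *
            Real.sqrt (∑ b : ZMod p, ‖ft p f₂ b‖^2) :=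
          Real.sqrt_mul (Finset.sum_nonneg fun b _ => by positivity) _
      _ = L2 p f₁ * L2 p f₂ := by
          rw [h2, parseval, parseval, L2, L2]
  -- assemble
  calc ‖ft p 𝒟 ξ‖
      = ‖∑ b : ZMod p, ft p f₁ (ξ - b) * ft p f₂ b * T b‖ := by rw [hmain]
    _ ≤ ∑ b : ZMod p, ‖ft p f₁ (ξ - b) * ft p f₂ b * T b‖ :=
        norm_sum_le _ _
    _ ≤ ∑ b : ZMod p, C * (p : ℝ) ^ (-(1:ℝ)/2) *
          (‖ft p f₁ (ξ - b)‖ * ‖ft p f₂ b‖) :=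
        Finset.sum_le_sum fun b _ => hterm b
    _ = C * (p : ℝ) ^ (-(1:ℝ)/2) *
          ∑ b : ZMod p, ‖ft p f₁ (ξ - b)‖ * ‖ft p f₂ b‖ := by
        rw [← Finset.mul_sum]
    _ ≤ C * (p : ℝ) ^ (-(1:ℝ)/2) * (L2 p f₁ * L2 p f₂) :=
        mul_le_mul_of_nonneg_left hcs (by positivity)
    _ ≤ |C| * (p : ℝ) ^ (-(1:ℝ)/2) * L2 p f₁ * L2 p f₂ := by
        rw [abs_of_nonneg hC]
        exact le_of_eq (by ring)
end

section
/- Let F, G ∈ ℚ(t) be rational functions such that F, G, and the constant function 1 are linearly independent over ℚ. Then the rational function H(t) = ((F'(t) - G'(t)) · (G'(t)/F'(t))) / (G'(t)/F'(t))' is not a constant. In particular, neither F' - G' nor G'/F' is identically zero, and (G'/F')' is not identically zero. -/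
/-!
Since the kernel of `d/dt` on `ℚ(t)` is `ℚ`, linear independence of `1, F, G` makes `F', G'`
linearly independent, which gives the three non-vanishing claims. If `H = c`, then `c ≠ 0` and
`w = G'/F'` satisfies `w' = R' w` with `R = (F - G)/c` nonconstant, i.e. `w` would be `exp R`.
This is impossible: writing `w = p/q` and `R = a/b` in lowest terms, `w' = R' w` reads
`b² W(q, p) = W(b, a) p q` with `W` the Wronskian. An irreducible factor `π` of `b` with
multiplicity `m ≥ 1` divides the left side at least `2m - 1` times more often than it divides
`p q`, the right side exactly `m - 1` times more often; so `b` is constant, and then comparing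
degrees forces `W(b, a) = 0`, i.e. `R' = 0`.
-/

/-- The derivative of a rational function over ℚ, via the quotient rule on
numerator and denominator. -/
noncomputable def rd (F : RatFunc ℚ) : RatFunc ℚ :=
  (algebraMap (Polynomial ℚ) (RatFunc ℚ) (Polynomial.derivative F.num) *
      algebraMap (Polynomial ℚ) (RatFunc ℚ) F.denom -
    algebraMap (Polynomial ℚ) (RatFunc ℚ) F.num *
      algebraMap (Polynomial ℚ) (RatFunc ℚ) (Polynomial.derivative F.denom)) /
  algebraMap (Polynomial ℚ) (RatFunc ℚ) F.denom ^ 2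

namespace Polynomial

theorem pow_add_sub_one_dvd_wronskian {R : Type*} [CommRing R] {π p q : R[X]} {e f : ℕ}
    (hp : π ^ e ∣ p) (hq : π ^ f ∣ q) : π ^ (e + f - 1) ∣ wronskian q p := by
  refine dvd_sub ?_ ?_
  · refine (pow_dvd_pow π (by omega : e + f - 1 ≤ f + (e - 1))).trans ?_
    rw [pow_add]
    exact mul_dvd_mul hq (pow_sub_one_dvd_derivative_of_pow_dvd hp)
  · refine (pow_dvd_pow π (by omega : e + f - 1 ≤ f - 1 + e)).trans ?_
    rw [pow_add]
    exact mul_dvd_mul (pow_sub_one_dvd_derivative_of_pow_dvd hq) hp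

variable {K : Type*} [Field K]

theorem wronskian_eq_zero_of_isUnit {a b p q : K[X]} (hb : IsUnit b) (hp : p ≠ 0) (hq : q ≠ 0)
    (h : b ^ 2 * wronskian q p = wronskian b a * (p * q)) : wronskian b a = 0 := by
  by_contra hW
  have hWqp : wronskian q p ≠ 0 := by
    rintro h0
    rw [h0, mul_zero, eq_comm] at h
    exact mul_ne_zero hW (mul_ne_zero hp hq) h
  have hdeg := congrArg natDegree h
  rw [natDegree_mul (pow_ne_zero 2 hb.ne_zero) hWqp, natDegree_pow, natDegree_eq_zero_of_isUnit hb,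
    natDegree_mul hW (mul_ne_zero hp hq), natDegree_mul hp hq] at hdeg
  have := natDegree_wronskian_lt_add hWqp
  omega

variable [CharZero K]

theorem not_pow_dvd_wronskian_pow_mul {π s a : K[X]} {m : ℕ} (hπ : Irreducible π) (hm : m ≠ 0)
    (hs : ¬π ∣ s) (ha : ¬π ∣ a) : ¬π ^ m ∣ wronskian (π ^ m * s) a := by
  obtain ⟨n, rfl⟩ := Nat.exists_eq_succ_of_ne_zero hm
  have hW : wronskian (π ^ (n + 1) * s) a =
      π ^ n * (π * (s * derivative a - derivative s * a) -
        C ((n + 1 : ℕ) : K) * derivative π * s * a) := by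
    rw [wronskian, derivative_mul, derivative_pow, Nat.add_sub_cancel]
    ring
  rw [hW, pow_succ, mul_dvd_mul_iff_left (pow_ne_zero n hπ.ne_zero),
    dvd_sub_right (dvd_mul_right _ _)]
  have hC : ¬π ∣ C ((n + 1 : ℕ) : K) := fun h =>
    hπ.not_isUnit (isUnit_of_dvd_unit h (isUnit_C.2 (Nat.cast_ne_zero.2 n.succ_ne_zero).isUnit))
  have hπ' : ¬π ∣ derivative π := fun h => hπ.not_isUnit (hπ.separable.isUnit_of_dvd' dvd_rfl h)
  simp only [hπ.prime.dvd_mul]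
  tauto

theorem isUnit_of_sq_mul_wronskian_eq {a b p q : K[X]} (hab : IsCoprime a b) (hb : b ≠ 0)
    (hp : p ≠ 0) (hq : q ≠ 0) (h : b ^ 2 * wronskian q p = wronskian b a * (p * q)) :
    IsUnit b := by
  by_contra hbu
  obtain ⟨π, hπ, hπb⟩ := WfDvdMonoid.exists_irreducible_factor hbu hb
  obtain ⟨m, s, hπs, rfl⟩ := WfDvdMonoid.max_power_factor hb hπ
  obtain ⟨e, p₀, hπp₀, rfl⟩ := WfDvdMonoid.max_power_factor hp hπ
  obtain ⟨f, q₀, hπq₀, rfl⟩ := WfDvdMonoid.max_power_factor hq hπ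
  have hm : m ≠ 0 := by rintro rfl; exact hπs (by simpa using hπb)
  have hπa : ¬π ∣ a := fun hd => hπ.not_isUnit (hab.isUnit_of_dvd' hd hπb)
  have hdvd : π ^ (e + f) * π ^ m ∣ π ^ (e + f) * (wronskian (π ^ m * s) a * (p₀ * q₀)) := by
    have hL := mul_dvd_mul (pow_dvd_pow_of_dvd (dvd_mul_right (π ^ m) s) 2)
      (pow_add_sub_one_dvd_wronskian (dvd_mul_right (π ^ e) p₀) (dvd_mul_right (π ^ f) q₀))
    rw [h, ← pow_mul] at hL
    calc π ^ (e + f) * π ^ m ∣ π ^ (m * 2) * π ^ (e + f - 1) := by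
          rw [← pow_add, ← pow_add]; exact pow_dvd_pow π (by omega)
      _ ∣ _ := hL
      _ = _ := by ring
  rw [mul_dvd_mul_iff_left (pow_ne_zero _ hπ.ne_zero)] at hdvd
  have hcop : IsCoprime (π ^ m) (p₀ * q₀) :=
    ((hπ.coprime_iff_not_dvd.2 hπp₀).mul_right (hπ.coprime_iff_not_dvd.2 hπq₀)).pow_left
  exact not_pow_dvd_wronskian_pow_mul hπ hm hπs hπa (hcop.dvd_of_dvd_mul_right hdvd)

end Polynomial

open Polynomial

local notation "ι" => algebraMap ℚ[X] (RatFunc ℚ)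

theorem rd_algebraMap_div (p q : ℚ[X]) (hq : q ≠ 0) :
    rd (ι p / ι q) = ι (wronskian q p) / ι q ^ 2 := by
  set x := ι p / ι q
  have hd : x.denom ≠ 0 := x.denom_ne_zero
  have cross : p * x.denom = x.num * q := by
    apply RatFunc.algebraMap_injective ℚ
    have := RatFunc.num_div_denom x
    rw [div_eq_div_iff (RatFunc.algebraMap_ne_zero hd) (RatFunc.algebraMap_ne_zero hq)] at this
    simp only [map_mul]
    linear_combination -this
  have dcross := congrArg derivative cross
  rw [derivative_mul, derivative_mul] at dcross
  rw [rd, div_eq_div_iff (pow_ne_zero 2 (RatFunc.algebraMap_ne_zero hd))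
    (pow_ne_zero 2 (RatFunc.algebraMap_ne_zero hq))]
  simp only [wronskian, ← map_pow, ← map_mul, ← map_sub]
  congr 1
  linear_combination (derivative x.denom * q + x.denom * derivative q) * cross -
    x.denom * q * dcross

theorem rd_eq_wronskian (F : RatFunc ℚ) : rd F = ι (wronskian F.denom F.num) / ι F.denom ^ 2 := by
  simpa only [RatFunc.num_div_denom] using rd_algebraMap_div F.num F.denom F.denom_ne_zero

theorem rd_add (F G : RatFunc ℚ) : rd (F + G) = rd F + rd G := by
  have hF := RatFunc.algebraMap_ne_zero F.denom_ne_zero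
  have hG := RatFunc.algebraMap_ne_zero G.denom_ne_zero
  have hrep : F + G = ι (F.num * G.denom + F.denom * G.num) / ι (F.denom * G.denom) := by
    rw [map_add, map_mul, map_mul, map_mul, ← div_add_div _ _ hF hG, RatFunc.num_div_denom,
      RatFunc.num_div_denom]
  rw [hrep, rd_algebraMap_div _ _ (mul_ne_zero F.denom_ne_zero G.denom_ne_zero),
    rd_eq_wronskian F, rd_eq_wronskian G]
  simp only [wronskian, derivative_mul, map_add, map_sub, map_mul]
  field_simp
  ring

theorem rd_C_mul (c : ℚ) (F : RatFunc ℚ) : rd (RatFunc.C c * F) = RatFunc.C c * rd F := by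
  have hrep : RatFunc.C c * F = ι (Polynomial.C c * F.num) / ι F.denom := by
    rw [map_mul, RatFunc.algebraMap_C, mul_div_assoc, RatFunc.num_div_denom]
  rw [hrep, rd_algebraMap_div _ _ F.denom_ne_zero, rd_eq_wronskian F]
  simp only [wronskian, derivative_C_mul, map_sub, map_mul, RatFunc.algebraMap_C]
  ring

theorem rd_sub (F G : RatFunc ℚ) : rd (F - G) = rd F - rd G := by
  have hneg : -G = RatFunc.C (-1) * G := by rw [map_neg, map_one, neg_one_mul]
  rw [sub_eq_add_neg, hneg, rd_add, rd_C_mul, map_neg, map_one, neg_one_mul, ← sub_eq_add_neg]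

theorem rd_eq_zero_iff {u : RatFunc ℚ} : rd u = 0 ↔ ∃ c : ℚ, u = RatFunc.C c := by
  constructor
  · intro h
    rw [rd_eq_wronskian, div_eq_zero_iff,
      or_iff_left (pow_ne_zero 2 (RatFunc.algebraMap_ne_zero u.denom_ne_zero)),
      map_eq_zero_iff _ (RatFunc.algebraMap_injective ℚ),
      (RatFunc.isCoprime_num_denom u).symm.wronskian_eq_zero_iff] at h
    have hu := RatFunc.num_div_denom u
    rw [eq_C_of_derivative_eq_zero h.1, eq_C_of_derivative_eq_zero h.2, RatFunc.algebraMap_C,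
      RatFunc.algebraMap_C, ← map_div₀] at hu
    exact ⟨_, hu.symm⟩
  · rintro ⟨c, rfl⟩
    rw [rd_eq_wronskian, RatFunc.num_C, RatFunc.denom_C]
    simp [wronskian]

theorem rd_eq_zero_of_rd_eq_mul {u R : RatFunc ℚ} (hu : u ≠ 0) (h : rd u = rd R * u) :
    rd R = 0 := by
  have hpoly : R.denom ^ 2 * wronskian u.denom u.num =
      wronskian R.denom R.num * (u.num * u.denom) := by
    apply RatFunc.algebraMap_injective ℚ
    rw [rd_eq_wronskian, rd_eq_wronskian] at h
    conv at h => rhs; rw [← RatFunc.num_div_denom u]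
    have hu' := RatFunc.algebraMap_ne_zero u.denom_ne_zero
    have hR := RatFunc.algebraMap_ne_zero R.denom_ne_zero
    field_simp at h
    simp only [map_mul, map_pow]
    linear_combination h
  have hb : IsUnit R.denom := isUnit_of_sq_mul_wronskian_eq (RatFunc.isCoprime_num_denom R)
    R.denom_ne_zero (RatFunc.num_ne_zero hu) u.denom_ne_zero hpoly
  rw [rd_eq_wronskian,
    wronskian_eq_zero_of_isUnit hb (RatFunc.num_ne_zero hu) u.denom_ne_zero hpoly, map_zero,
    zero_div]

theorem linearIndependent_rd_of_linearIndependent {F G : RatFunc ℚ}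
    (h : LinearIndependent ℚ ![1, F, G]) : LinearIndependent ℚ ![rd F, rd G] := by
  rw [LinearIndependent.pair_iff]
  intro s t hst
  simp only [Rat.smul_def, ← eq_ratCast RatFunc.C] at hst
  rw [← rd_C_mul, ← rd_C_mul, ← rd_add, rd_eq_zero_iff] at hst
  obtain ⟨c, hc⟩ := hst
  have hcoef := Fintype.linearIndependent_iff.1 h ![-c, s, t] (by
    simp only [eq_ratCast] at hc
    simp only [Nat.succ_eq_add_one, Nat.reduceAdd, Rat.smul_def, Fin.sum_univ_three, Fin.isValue,
      Matrix.cons_val_zero, Rat.cast_neg, mul_one, Matrix.cons_val_one, Matrix.cons_val]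
    linear_combination hc)
  exact ⟨hcoef 1, hcoef 2⟩

theorem rd_div_ne_zero_of_linearIndependent {f g : RatFunc ℚ}
    (h : LinearIndependent ℚ ![f, g]) : rd (g / f) ≠ 0 := by
  have hf : f ≠ 0 := by simpa using h.ne_zero 0
  rw [Ne, rd_eq_zero_iff, not_exists]
  intro c hc
  refine (LinearIndependent.pair_iff' hf).1 h c ?_
  rw [Rat.smul_def, ← eq_ratCast RatFunc.C, ← hc, div_mul_cancel₀ g hf]

theorem key_nondegeneracy (F G : RatFunc ℚ)
    (h : LinearIndependent ℚ ![1, F, G]) :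
    (¬∃ c : ℚ, ((rd F - rd G) * (rd G / rd F)) / rd (rd G / rd F) = RatFunc.C c) ∧
      rd F - rd G ≠ 0 ∧ rd G / rd F ≠ 0 ∧ rd (rd G / rd F) ≠ 0 := by
  have hli := linearIndependent_rd_of_linearIndependent h
  have hF : rd F ≠ 0 := by simpa using hli.ne_zero 0
  have hG : rd G ≠ 0 := by simpa using hli.ne_zero 1
  have hsub : rd F - rd G ≠ 0 := fun h0 =>
    one_ne_zero (LinearIndependent.pair_iff.1 hli 1 (-1) (by simpa [← sub_eq_add_neg] using h0)).1
  have hw : rd (rd G / rd F) ≠ 0 := rd_div_ne_zero_of_linearIndependent hli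
  refine ⟨?_, hsub, div_ne_zero hG hF, hw⟩
  rintro ⟨c, hc⟩
  rw [div_eq_iff hw] at hc
  have hc0 : c ≠ 0 := by
    rintro rfl
    simp [hsub, hF, hG] at hc
  have hlog : rd (rd G / rd F) = rd (RatFunc.C c⁻¹ * (F - G)) * (rd G / rd F) := by
    rw [rd_C_mul, rd_sub, mul_assoc, hc, ← mul_assoc, ← map_mul, inv_mul_cancel₀ hc0, map_one,
      one_mul]
  have hR := rd_eq_zero_of_rd_eq_mul (div_ne_zero hG hF) hlog
  rw [rd_C_mul, rd_sub, mul_eq_zero, map_eq_zero_iff _ RatFunc.C_injective] at hR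
  exact hsub (hR.resolve_left (inv_ne_zero hc0))
end
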